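/- Let k > 0 be an integer and p a prime with k < p < 2k. Then B = {k+1} ∪ {1 + (2k+2)i : i ∈ [0, p-1]} is a quasi-perfect B[-k,k](p(2k+2)) splitter set; that is, B is a B[-k,k](p(2k+2)) set of size p+1 = ⌊(p(2k+2)-1)/(2k)⌋. -/

import Mathlib

/-- `b·[-k1,k2]* = {b·j mod q : -k1 ≤ j ≤ k2, j ≠ 0}` as a finset of `ZMod q`. -/
noncomputable def bStar (k1 k2 q : ℕ) (b : ZMod q) : Finset (ZMod q) :=
  ((Finset.Icc (-(k1 : ℤ)) (k2 : ℤ)).erase 0).image (fun j : ℤ => b * (j : ZMod q))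

/-- `B` is a `B[-k1,k2](q)` splitter set. -/
def IsSplitter (k1 k2 q : ℕ) (B : Finset (ZMod q)) : Prop :=
  (∀ b ∈ B, (bStar k1 k2 q b).card = k1 + k2) ∧
  ((B : Set (ZMod q)).Pairwise fun b b' => Disjoint (bStar k1 k2 q b) (bStar k1 k2 q b'))

/-- `B` is a perfect splitter set: `|B| = (q-1)/(k1+k2)` with exact division. -/
def IsPerfectSplitter (k1 k2 q : ℕ) (B : Finset (ZMod q)) : Prop :=
  IsSplitter k1 k2 q B ∧ (k1 + k2) * B.card = q - 1

/-! Write `q = p(2k+2)`. Being a splitter set amounts to injectivity of `(b, j) ↦ b·j` on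
`B × ([-k,k] \ {0})`. For multipliers `1 + (2k+2)i` and `1 + (2k+2)i'`, reducing modulo `2k+2`
forces `j = j'` (as `|j - j'| ≤ 2k`), and then `p ∣ (i - i')j` forces `i = i'` since
`0 < |j| ≤ k < p`. Modulo `k+1` the multiplier `k+1` vanishes while `1 + (2k+2)i ≡ 1`, so a
collision between them gives `k+1 ∣ j'`; and `(k+1)j ≡ (k+1)j' (mod (k+1)·2p)` gives
`2p ∣ j - j'`. Taking `j = 1` shows that the `p+1` multipliers are distinct. -/

open Finset

theorem Int.ModEq.eq_of_abs_sub_lt {a b n : ℤ} (h : a ≡ b [ZMOD n]) (hlt : |b - a| < n) :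
    a = b :=
  (sub_eq_zero.1 (Int.eq_zero_of_abs_lt_dvd (Int.modEq_iff_dvd.1 h) hlt)).symm

noncomputable def puncturedIcc (k1 k2 : ℕ) : Finset ℤ :=
  (Icc (-(k1 : ℤ)) k2).erase 0

theorem mem_puncturedIcc {k1 k2 : ℕ} {j : ℤ} :
    j ∈ puncturedIcc k1 k2 ↔ j ≠ 0 ∧ -(k1 : ℤ) ≤ j ∧ j ≤ k2 := by
  rw [puncturedIcc, mem_erase, mem_Icc]

theorem card_puncturedIcc (k1 k2 : ℕ) : (puncturedIcc k1 k2).card = k1 + k2 := by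
  rw [puncturedIcc, card_erase_of_mem (by simp), Int.card_Icc]
  omega

theorem bStar_eq_image (k1 k2 q : ℕ) (b : ZMod q) :
    bStar k1 k2 q b = (puncturedIcc k1 k2).image fun j : ℤ => b * j :=
  rfl

section Splitter

variable {ι : Type*} {k1 k2 q : ℕ} {s : Finset ι} {g : ι → ZMod q}

theorem isSplitter_image
    (h : Set.InjOn (fun x : ι × ℤ => g x.1 * x.2) (s ×ˢ puncturedIcc k1 k2 : Finset _)) :
    IsSplitter k1 k2 q (s.image g) := by
  refine ⟨?_, ?_⟩
  · simp only [forall_mem_image]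
    intro i hi
    rw [bStar_eq_image, card_image_of_injOn, card_puncturedIcc]
    intro j hj j' hj' heq
    exact (Prod.ext_iff.1 (h (mk_mem_product hi hj) (mk_mem_product hi hj') heq)).2
  · simp only [coe_image]
    rintro _ ⟨i, hi, rfl⟩ _ ⟨i', hi', rfl⟩ hne
    rw [disjoint_left]
    simp only [bStar_eq_image, mem_image]
    rintro _ ⟨j, hj, rfl⟩ ⟨j', hj', heq⟩
    have := h (mk_mem_product hi' hj') (mk_mem_product hi hj) heq
    exact hne (congrArg g (Prod.ext_iff.1 this).1).symm

theorem card_image_of_injOn_mul (hk2 : 0 < k2)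
    (h : Set.InjOn (fun x : ι × ℤ => g x.1 * x.2) (s ×ˢ puncturedIcc k1 k2 : Finset _)) :
    (s.image g).card = s.card := by
  have h1 : (1 : ℤ) ∈ puncturedIcc k1 k2 := mem_puncturedIcc.2 (by omega)
  refine card_image_of_injOn fun i hi i' hi' heq => ?_
  have := h (mk_mem_product hi h1) (mk_mem_product hi' h1) (by simpa using heq)
  exact (Prod.ext_iff.1 this).1

end Splitter

section Arithmetic

variable {k p : ℕ} {j j' : ℤ}

theorem eq_of_mul_modEq_mul (hkp : k < p) (hj : |j| ≤ k) (hj' : |j'| ≤ k)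
    (h : (k + 1 : ℤ) * j ≡ (k + 1) * j' [ZMOD p * (2 * k + 2)]) : j = j' := by
  rw [show (p : ℤ) * (2 * k + 2) = (k + 1) * (2 * p) by ring] at h
  refine (Int.ModEq.mul_left_cancel' (by positivity) h).eq_of_abs_sub_lt ?_
  rw [abs_le] at hj hj'
  rw [abs_lt]
  omega

theorem not_mul_modEq_one_add_mul (i : ℤ) (hj' : j' ≠ 0) (hj'k : |j'| ≤ k) :
    ¬ (k + 1 : ℤ) * j ≡ (1 + (2 * k + 2) * i) * j' [ZMOD p * (2 * k + 2)] := by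
  intro h
  have hmod : 0 ≡ j' [ZMOD k + 1] := calc
    0 ≡ (k + 1) * j [ZMOD k + 1] := (Int.modEq_zero_iff_dvd.2 (dvd_mul_right _ _)).symm
    _ ≡ (1 + (2 * k + 2) * i) * j' [ZMOD k + 1] := h.of_dvd ⟨2 * p, by ring⟩
    _ ≡ j' [ZMOD k + 1] := Int.modEq_iff_dvd.2 ⟨-(2 * i * j'), by ring⟩
  refine hj' (hmod.eq_of_abs_sub_lt ?_).symm
  rw [sub_zero]
  omega

theorem eq_of_one_add_mul_modEq (hp : p.Prime) (hkp : k < p) {i i' : ℕ}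
    (hi : i < p) (hi' : i' < p) (hj : j ≠ 0) (hjk : |j| ≤ k) (hj'k : |j'| ≤ k)
    (h : (1 + (2 * k + 2) * i : ℤ) * j ≡ (1 + (2 * k + 2) * i') * j' [ZMOD p * (2 * k + 2)]) :
    i = i' ∧ j = j' := by
  have hjj' : j = j' := by
    have hmod : j ≡ j' [ZMOD 2 * k + 2] := calc
      j ≡ (1 + (2 * k + 2) * i) * j [ZMOD 2 * k + 2] := Int.modEq_iff_dvd.2 ⟨i * j, by ring⟩
      _ ≡ (1 + (2 * k + 2) * i') * j' [ZMOD 2 * k + 2] := h.of_mul_left _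
      _ ≡ j' [ZMOD 2 * k + 2] := Int.modEq_iff_dvd.2 ⟨-(i' * j'), by ring⟩
    refine hmod.eq_of_abs_sub_lt ?_
    rw [abs_le] at hjk hj'k
    rw [abs_lt]
    omega
  subst hjj'
  refine ⟨?_, rfl⟩
  have hdvd : (p : ℤ) ∣ (i' - i) * j := by
    have := Int.modEq_iff_dvd.1 h
    rw [show (1 + (2 * k + 2) * i' : ℤ) * j - (1 + (2 * k + 2) * i) * j
      = (2 * k + 2) * ((i' - i) * j) by ring, mul_comm] at this
    exact (mul_dvd_mul_iff_left (by positivity)).1 this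
  rcases (Nat.prime_iff_prime_int.1 hp).dvd_mul.1 hdvd with hii' | hpj
  · have := Int.eq_zero_of_abs_lt_dvd hii' (by rw [abs_lt]; omega)
    omega
  · exact absurd (Int.eq_zero_of_abs_lt_dvd hpj (by omega)) hj

end Arithmetic

def splitterMultiplier (k : ℕ) : Option ℕ → ℕ
  | none => k + 1
  | some i => 1 + (2 * k + 2) * i

theorem splitterMultiplier_mul_injOn {k p : ℕ} (hp : p.Prime) (hkp : k < p) :
    Set.InjOn
      (fun x : Option ℕ × ℤ => (splitterMultiplier k x.1 : ZMod (p * (2 * k + 2))) * x.2)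
      ((range p).insertNone ×ˢ puncturedIcc k k : Finset _) := by
  rintro ⟨o, j⟩ hoj ⟨o', j'⟩ hoj' heq
  simp only [coe_product, Set.mem_prod, mem_coe, mem_insertNone, mem_range,
    mem_puncturedIcc] at hoj hoj'
  obtain ⟨ho, hj, hjk⟩ := hoj
  obtain ⟨ho', hj', hj'k⟩ := hoj'
  rw [← abs_le] at hjk hj'k
  replace heq : (splitterMultiplier k o : ℤ) * j ≡ splitterMultiplier k o' * j'
      [ZMOD p * (2 * k + 2)] := by
    have := (ZMod.intCast_eq_intCast_iff ((splitterMultiplier k o : ℤ) * j)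
      (splitterMultiplier k o' * j') (p * (2 * k + 2))).1 (by push_cast; exact heq)
    push_cast at this
    exact this
  cases o <;> cases o' <;> simp only [splitterMultiplier, Nat.cast_add, Nat.cast_mul,
    Nat.cast_one, Nat.cast_ofNat] at heq ⊢
  · simp [eq_of_mul_modEq_mul hkp hjk hj'k heq]
  · exact absurd heq (not_mul_modEq_one_add_mul _ hj' hj'k)
  · exact absurd heq.symm (not_mul_modEq_one_add_mul _ hj hjk)
  · simpa using eq_of_one_add_mul_modEq hp hkp (ho _ rfl) (ho' _ rfl) hj hjk hj'k heq

theorem stmt_12_general (k p : ℕ) (hk : 0 < k) (hp : p.Prime) (h1 : k < p) :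
    IsSplitter k k (p * (2 * k + 2))
        (insert ((k + 1 : ℕ) : ZMod (p * (2 * k + 2)))
          ((Finset.range p).image
            (fun i => ((1 + (2 * k + 2) * i : ℕ) : ZMod (p * (2 * k + 2)))))) ∧
      (insert ((k + 1 : ℕ) : ZMod (p * (2 * k + 2)))
          ((Finset.range p).image
            (fun i => ((1 + (2 * k + 2) * i : ℕ) : ZMod (p * (2 * k + 2)))))).card
        = p + 1 := by
  have hB : insert ((k + 1 : ℕ) : ZMod (p * (2 * k + 2)))
      ((range p).image fun i => ((1 + (2 * k + 2) * i : ℕ) : ZMod (p * (2 * k + 2))))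
      = (range p).insertNone.image fun o => (splitterMultiplier k o : ZMod (p * (2 * k + 2))) := by
    ext x
    simp [mem_insertNone, Option.exists, splitterMultiplier, eq_comm]
  have hinj := splitterMultiplier_mul_injOn hp h1
  rw [hB]
  exact ⟨isSplitter_image hinj,
    by rw [card_image_of_injOn_mul hk hinj, card_insertNone, card_range]⟩

theorem stmt_12 (k p : ℕ) (hk : 0 < k) (hp : p.Prime) (h1 : k < p) (h2 : p < 2 * k) :
    IsSplitter k k (p * (2 * k + 2))
        (insert ((k + 1 : ℕ) : ZMod (p * (2 * k + 2)))
          ((Finset.range p).image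
            (fun i => ((1 + (2 * k + 2) * i : ℕ) : ZMod (p * (2 * k + 2)))))) ∧
      (insert ((k + 1 : ℕ) : ZMod (p * (2 * k + 2)))
          ((Finset.range p).image
            (fun i => ((1 + (2 * k + 2) * i : ℕ) : ZMod (p * (2 * k + 2)))))).card
        = p + 1 :=
  stmt_12_general k p hk hp h1
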